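/- Let ε be a standard logistic random variable. Then E[ε | ε ≤ s] = −H(F(s))/F(s), where F(s) = 1/(1+e^{−s}) and H is the binary entropy function; in particular E[ε | ε ≤ 0] = −2 log 2. -/

import Mathlib

/-!
With `σ(x) = eˣ/(1+eˣ)` the logistic function, the first partial moment integrand
`x σ'(x) = x eˣ/(1+eˣ)²` has the antiderivative `x σ(x) - log(1+eˣ)`, which vanishes at `-∞`.
So `∫_{-∞}^s x σ'(x) dx = s σ(s) - log(1+eˢ)`, and since `1 - σ(s) = 1/(1+eˢ)` this is exactly
`-H(σ(s))`.
-/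

/-- Binary entropy function. -/
noncomputable def binEnt (z : ℝ) : ℝ := -z * Real.log z - (1 - z) * Real.log (1 - z)

open Real Set MeasureTheory Filter

lemma hasDerivAt_mul_logistic_sub_log_one_add_exp (x : ℝ) :
    HasDerivAt (fun x => x * (exp x / (1 + exp x)) - log (1 + exp x))
      (x * (exp x / (1 + exp x) ^ 2)) x := by
  have hpos : 0 < 1 + exp x := by positivity
  have hσ : HasDerivAt (fun x => exp x / (1 + exp x)) (exp x / (1 + exp x) ^ 2) x := by
    refine ((hasDerivAt_exp x).div ((hasDerivAt_exp x).const_add 1) hpos.ne').congr_deriv ?_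
    ring
  have hlog : HasDerivAt (fun x => log (1 + exp x)) (exp x / (1 + exp x)) x :=
    ((hasDerivAt_exp x).const_add 1).log hpos.ne'
  refine (((hasDerivAt_id' x).mul hσ).sub hlog).congr_deriv ?_
  ring

lemma tendsto_mul_logistic_sub_log_one_add_exp_atBot :
    Tendsto (fun x => x * (exp x / (1 + exp x)) - log (1 + exp x)) atBot (nhds 0) := by
  have hxexp : Tendsto (fun x : ℝ => x * exp x) atBot (nhds 0) := by
    have h := ((tendsto_pow_mul_exp_neg_atTop_nhds_zero 1).comp tendsto_neg_atBot_atTop).neg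
    simpa [Function.comp_def] using h
  have hden : Tendsto (fun x : ℝ => 1 + exp x) atBot (nhds 1) := by
    simpa using tendsto_exp_atBot.const_add 1
  have hlog : Tendsto (fun x : ℝ => log (1 + exp x)) atBot (nhds 0) := by
    simpa using hden.log one_ne_zero
  simpa [mul_div_assoc] using (hxexp.div hden one_ne_zero).sub hlog

lemma integrableOn_mul_exp_Iic (s : ℝ) : IntegrableOn (fun x => x * exp x) (Iic s) := by
  have h := ProbabilityTheory.integrable_pow_mul_exp_of_integrable_exp_mul (X := id) (v := 1)
    (t := 1 / 2) (by norm_num) (integrableOn_exp_mul_Iic (by norm_num) s)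
    (integrableOn_exp_mul_Iic (by norm_num) s) 1
  simpa [IntegrableOn] using h

lemma integrableOn_mul_logisticDensity_Iic (s : ℝ) :
    IntegrableOn (fun x => x * (exp x / (1 + exp x) ^ 2)) (Iic s) := by
  refine Integrable.mono (integrableOn_mul_exp_Iic s) (by fun_prop) (ae_of_all _ fun x => ?_)
  have hden : 1 ≤ (1 + exp x) ^ 2 := one_le_pow₀ (by linarith [exp_pos x])
  rw [← mul_div_assoc, norm_div, norm_of_nonneg (by positivity : (0:ℝ) ≤ (1 + exp x) ^ 2)]
  exact div_le_self (norm_nonneg _) hden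

lemma integral_mul_logisticDensity_Iic (s : ℝ) :
    ∫ x in Iic s, x * (exp x / (1 + exp x) ^ 2) =
      s * (exp s / (1 + exp s)) - log (1 + exp s) := by
  simpa using integral_Iic_of_hasDerivAt_of_tendsto'
    (fun x _ => hasDerivAt_mul_logistic_sub_log_one_add_exp x)
    (integrableOn_mul_logisticDensity_Iic s) tendsto_mul_logistic_sub_log_one_add_exp_atBot

lemma binEnt_logistic (s : ℝ) :
    binEnt (1 / (1 + exp (-s))) = log (1 + exp s) - s * (exp s / (1 + exp s)) := by
  have hpos : 0 < 1 + exp s := by positivity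
  have hσ : 1 / (1 + exp (-s)) = exp s / (1 + exp s) := by
    rw [exp_neg]
    field_simp
    ring
  have hσc : 1 - exp s / (1 + exp s) = 1 / (1 + exp s) := by
    field_simp
    ring
  rw [binEnt, hσ, hσc, log_div (exp_ne_zero s) hpos.ne', log_exp,
    log_div one_ne_zero hpos.ne', log_one]
  field_simp
  ring

lemma binEnt_half : binEnt (1 / 2) = log 2 := by
  rw [binEnt, show (1 : ℝ) - 1 / 2 = 1 / 2 by norm_num, one_div, log_inv]
  ring

/-- Conditional expectation of a standard logistic random variable truncated from
above: `E[ε | ε ≤ s] = -H(F(s))/F(s)` with `F(s) = 1/(1+e^{-s})`; in particular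
`E[ε | ε ≤ 0] = -2 log 2`. -/
theorem stmt_16 :
    (∀ s : ℝ,
      (∫ x in Set.Iic s, x * (Real.exp x / (1 + Real.exp x)^2)) /
          (1 / (1 + Real.exp (-s))) =
        -binEnt (1 / (1 + Real.exp (-s))) / (1 / (1 + Real.exp (-s)))) ∧
    (∫ x in Set.Iic (0:ℝ), x * (Real.exp x / (1 + Real.exp x)^2)) /
          (1 / (1 + Real.exp (-(0:ℝ)))) = -(2 * Real.log 2) := by
  have partialMoment (s : ℝ) :
      ∫ x in Iic s, x * (exp x / (1 + exp x) ^ 2) = -binEnt (1 / (1 + exp (-s))) := by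
    rw [integral_mul_logisticDensity_Iic, binEnt_logistic]
    ring
  refine ⟨fun s => by rw [partialMoment], ?_⟩
  rw [partialMoment, neg_zero, exp_zero, one_add_one_eq_two, binEnt_half]
  ring
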